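/- Let I ⊆ ℝ be an open interval, H a nonzero real number, and B : I → ℝ³ a smooth map with ⟨B,B⟩ = 0, ⟨B',B'⟩ = H², and H·det(B, B', B'') > 0 on I. Set κ₂ := −⟨B'',B''⟩/(2H³). Then det(B, B', B'') = H³ identically on I, and B''' = H·κ₂'·B + 2H·κ₂·B' on I. -/

import Mathlib

/-!
Differentiating the constraints `⟨B,B⟩ = 0` and `⟨B',B'⟩ = H²` gives all inner products among
`B, B', B''` except `⟨B'',B''⟩`, and the pairings of `B'''` with `B` and `B'`. The Gram
determinant of `B, B', B''` is then `−H⁶`, and since it equals `−det(B,B',B'')²` the sign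
condition forces `det(B,B',B'') = H³`. In particular `B, B', B''` is a basis, and the combination
`H²B''' + ⟨B'',B'''⟩B + ⟨B'',B''⟩B'` is `⟨·,·⟩`-orthogonal to all three basis vectors, hence zero;
this is the claimed formula for `B'''`, since `κ₂' = −⟨B'',B'''⟩/H³`.
-/

noncomputable section

/-- The Minkowski bilinear form on ℝ³ with signature (−,+,+):
`⟨x,y⟩ = −x₁y₁ + x₂y₂ + x₃y₃`. -/
def ml (x y : Fin 3 → ℝ) : ℝ := -(x 0 * y 0) + x 1 * y 1 + x 2 * y 2

/-- Determinant of the 3×3 matrix with columns `u`, `v`, `w`. -/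
def det3 (u v w : Fin 3 → ℝ) : ℝ :=
  u 0 * (v 1 * w 2 - v 2 * w 1) - v 0 * (u 1 * w 2 - u 2 * w 1)
    + w 0 * (u 1 * v 2 - u 2 * v 1)

/-- The Lorentzian cross product on ℝ³: the unique vector with
`ml (lcross u v) w = det3 u v w` for all `w`. -/
def lcross (u v : Fin 3 → ℝ) : Fin 3 → ℝ :=
  ![-(u 1 * v 2 - u 2 * v 1), u 2 * v 0 - u 0 * v 2, u 0 * v 1 - u 1 * v 0]

lemma ml_comm (u v : Fin 3 → ℝ) : ml u v = ml v u := by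
  simp only [ml]; ring

lemma ml_add_left (u v w : Fin 3 → ℝ) : ml (u + v) w = ml u w + ml v w := by
  simp only [ml, Pi.add_apply]; ring

lemma ml_sub_left (u v w : Fin 3 → ℝ) : ml (u - v) w = ml u w - ml v w := by
  simp only [ml, Pi.sub_apply]; ring

lemma ml_smul_left (a : ℝ) (u w : Fin 3 → ℝ) : ml (a • u) w = a * ml u w := by
  simp only [ml, Pi.smul_apply, smul_eq_mul]; ring

/-- `lcross c d, lcross d b, lcross b c` is, up to the factor `det3 b c d`, the basis dual to
`b, c, d` with respect to `ml`. -/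
lemma det3_smul_eq_ml_smul_lcross (b c d x : Fin 3 → ℝ) :
    det3 b c d • x = ml x b • lcross c d + ml x c • lcross d b + ml x d • lcross b c := by
  funext i
  fin_cases i <;> simp [det3, ml, lcross] <;> ring

lemma eq_zero_of_ml_eq_zero {b c d x : Fin 3 → ℝ} (hdet : det3 b c d ≠ 0)
    (hb : ml x b = 0) (hc : ml x c = 0) (hd : ml x d = 0) : x = 0 := by
  have h := det3_smul_eq_ml_smul_lcross b c d x
  rw [hb, hc, hd] at h
  simpa [hdet] using h

lemma det3_sq_eq_neg_det_gram (u v w : Fin 3 → ℝ) :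
    det3 u v w ^ 2 =
      -!![ml u u, ml u v, ml u w; ml v u, ml v v, ml v w; ml w u, ml w v, ml w w].det := by
  rw [Matrix.det_fin_three]
  simp [det3, ml]
  ring

theorem HasDerivAt.ml {u v : ℝ → Fin 3 → ℝ} {u' v' : Fin 3 → ℝ} {s : ℝ}
    (hu : HasDerivAt u u' s) (hv : HasDerivAt v v' s) :
    HasDerivAt (fun t => ml (u t) (v t)) (ml u' (v s) + ml (u s) v') s := by
  have hu := hasDerivAt_pi.1 hu
  have hv := hasDerivAt_pi.1 hv
  have h : HasDerivAt (fun t => -(u t 0 * v t 0) + u t 1 * v t 1 + u t 2 * v t 2) _ s :=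
    (((hu 0).mul (hv 0)).neg.add ((hu 1).mul (hv 1))).add ((hu 2).mul (hv 2))
  exact h.congr_deriv (by simp only [_root_.ml]; ring)

lemma ml_deriv_add_eq_zero_of_const {I : Set ℝ} (hI : IsOpen I) {u v u' v' : ℝ → Fin 3 → ℝ}
    {c : ℝ} (hu : ∀ s ∈ I, HasDerivAt u (u' s) s) (hv : ∀ s ∈ I, HasDerivAt v (v' s) s)
    (hc : ∀ s ∈ I, ml (u s) (v s) = c) :
    ∀ s ∈ I, ml (u' s) (v s) + ml (u s) (v' s) = 0 := by
  intro s hs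
  have hconst : (fun t => ml (u t) (v t)) =ᶠ[nhds s] fun _ => c :=
    Filter.eventuallyEq_of_mem (hI.mem_nhds hs) hc
  exact ((hu s hs).ml (hv s hs)).unique ((hasDerivAt_const s c).congr_of_eventuallyEq hconst)

lemma ContDiffOn.deriv_of_isOpen_top {E : Type*} [NormedAddCommGroup E] [NormedSpace ℝ E]
    {I : Set ℝ} (hI : IsOpen I) {f : ℝ → E} (hf : ContDiffOn ℝ (⊤ : ℕ∞) f I) :
    ContDiffOn ℝ (⊤ : ℕ∞) (deriv f) I :=
  hf.deriv_of_isOpen hI (by simp)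

lemma ContDiffOn.hasDerivAt_deriv {E : Type*} [NormedAddCommGroup E] [NormedSpace ℝ E]
    {I : Set ℝ} (hI : IsOpen I) {f : ℝ → E}
    (hf : ContDiffOn ℝ (⊤ : ℕ∞) f I) {s : ℝ} (hs : s ∈ I) : HasDerivAt f (deriv f s) s :=
  ((hf.differentiableOn (by simp)).differentiableAt (hI.mem_nhds hs)).hasDerivAt

lemma ml_relations_of_lightlike {I : Set ℝ} (hI : IsOpen I) {B : ℝ → Fin 3 → ℝ}
    (hB : ContDiffOn ℝ (⊤ : ℕ∞) B I) {q : ℝ} (hBB : ∀ s ∈ I, ml (B s) (B s) = 0)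
    (hB'B' : ∀ s ∈ I, ml (deriv B s) (deriv B s) = q) (s : ℝ) (hs : s ∈ I) :
    ml (B s) (deriv B s) = 0 ∧ ml (deriv B s) (deriv (deriv B) s) = 0 ∧
      ml (B s) (deriv (deriv B) s) = -q ∧ ml (B s) (deriv (deriv (deriv B)) s) = 0 ∧
      ml (deriv B s) (deriv (deriv (deriv B)) s)
        = -ml (deriv (deriv B) s) (deriv (deriv B) s) := by
  have hB1 := hB.deriv_of_isOpen_top hI
  have hB2 := hB1.deriv_of_isOpen_top hI
  have hD0 := fun s (hs : s ∈ I) => hB.hasDerivAt_deriv hI hs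
  have hD1 := fun s (hs : s ∈ I) => hB1.hasDerivAt_deriv hI hs
  have hD2 := fun s (hs : s ∈ I) => hB2.hasDerivAt_deriv hI hs
  have e01 : ∀ s ∈ I, ml (B s) (deriv B s) = 0 := fun s hs => by
    have := ml_deriv_add_eq_zero_of_const hI hD0 hD0 hBB s hs
    rw [ml_comm (deriv B s)] at this
    linarith
  have e12 : ∀ s ∈ I, ml (deriv B s) (deriv (deriv B) s) = 0 := fun s hs => by
    have := ml_deriv_add_eq_zero_of_const hI hD1 hD1 hB'B' s hs
    rw [ml_comm (deriv (deriv B) s)] at this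
    linarith
  have e02 : ∀ s ∈ I, ml (B s) (deriv (deriv B) s) = -q := fun s hs => by
    have := ml_deriv_add_eq_zero_of_const hI hD0 hD1 e01 s hs
    linarith [hB'B' s hs]
  have e03 := ml_deriv_add_eq_zero_of_const hI hD0 hD2 e02 s hs
  have e13 := ml_deriv_add_eq_zero_of_const hI hD1 hD2 e12 s hs
  refine ⟨e01 s hs, e12 s hs, e02 s hs, ?_, ?_⟩
  · linarith [e12 s hs]
  · linarith

lemma det3_eq_of_null_frame {b c d : Fin 3 → ℝ} {H : ℝ} (hbb : ml b b = 0) (hbc : ml b c = 0)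
    (hcc : ml c c = H ^ 2) (hbd : ml b d = -H ^ 2) (hcd : ml c d = 0)
    (hpos : 0 < H * det3 b c d) : det3 b c d = H ^ 3 := by
  have hsq : det3 b c d ^ 2 = (H ^ 3) ^ 2 := by
    rw [det3_sq_eq_neg_det_gram, Matrix.det_fin_three]
    simp [ml_comm c b, ml_comm d b, ml_comm d c, hbb, hbc, hcc, hbd, hcd]
    ring
  rcases sq_eq_sq_iff_eq_or_eq_neg.mp hsq with h | h
  · exact h
  · rw [h] at hpos
    nlinarith [sq_nonneg (H ^ 2)]

lemma eq_smul_add_smul_of_null_frame {b c d f : Fin 3 → ℝ} {q : ℝ} (hq : q ≠ 0)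
    (hdet : det3 b c d ≠ 0) (hbb : ml b b = 0) (hbc : ml b c = 0) (hcc : ml c c = q)
    (hbd : ml b d = -q) (hcd : ml c d = 0) (hbf : ml b f = 0) (hcf : ml c f = -ml d d) :
    f = (-ml d f / q) • b + (-ml d d / q) • c := by
  rw [← sub_eq_zero]
  apply eq_zero_of_ml_eq_zero hdet <;>
    simp only [ml_sub_left, ml_add_left, ml_smul_left]
  · rw [ml_comm f, ml_comm c b, hbb, hbc, hbf]; ring
  · rw [ml_comm f, hcf, hbc, hcc]; field_simp; ring
  · rw [ml_comm f, hbd, hcd]; field_simp; ring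

theorem stmt17_general
    (I : Set ℝ) (hIopen : IsOpen I)
    (H : ℝ) (hH : H ≠ 0)
    (B : ℝ → Fin 3 → ℝ)
    (hBsm : ContDiffOn ℝ (⊤ : ℕ∞) B I)
    (hBB : ∀ s ∈ I, ml (B s) (B s) = 0)
    (hB'B' : ∀ s ∈ I, ml (deriv B s) (deriv B s) = H ^ 2)
    (hdet : ∀ s ∈ I, 0 < H * det3 (B s) (deriv B s) (deriv (deriv B) s))
    (κ₂ : ℝ → ℝ)
    (hκdef : ∀ s, κ₂ s = -(ml (deriv (deriv B) s) (deriv (deriv B) s)) / (2 * H ^ 3)) :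
    ∀ s ∈ I,
      det3 (B s) (deriv B s) (deriv (deriv B) s) = H ^ 3 ∧
      deriv (deriv (deriv B)) s
        = (H * deriv κ₂ s) • B s + (2 * H * κ₂ s) • deriv B s := by
  intro s hs
  obtain ⟨h01, h12, h02, h03, h13⟩ := ml_relations_of_lightlike hIopen hBsm hBB hB'B' s hs
  have hdet3 := det3_eq_of_null_frame (hBB s hs) h01 (hB'B' s hs) h02 h12 (hdet s hs)
  refine ⟨hdet3, ?_⟩
  have hB2 : HasDerivAt (deriv (deriv B)) (deriv (deriv (deriv B)) s) s :=
    ((hBsm.deriv_of_isOpen_top hIopen).deriv_of_isOpen_top hIopen).hasDerivAt_deriv hIopen hs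
  have hκ' : deriv κ₂ s = -ml (deriv (deriv B) s) (deriv (deriv (deriv B)) s) / H ^ 3 := by
    have hκ : HasDerivAt κ₂ (-(ml (deriv (deriv (deriv B)) s) (deriv (deriv B) s)
        + ml (deriv (deriv B) s) (deriv (deriv (deriv B)) s)) / (2 * H ^ 3)) s := by
      rw [funext hκdef]
      exact (hB2.ml hB2).neg.div_const _
    rw [hκ.deriv, ml_comm (deriv (deriv (deriv B)) s)]
    field_simp
    ring
  refine (eq_smul_add_smul_of_null_frame (pow_ne_zero 2 hH) (hdet3 ▸ pow_ne_zero 3 hH) (hBB s hs)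
    h01 (hB'B' s hs) h02 h12 h03 h13).trans ?_
  rw [hκ', hκdef s]
  congr 2 <;> field_simp

/-- for a lightlike `B` with `⟨B',B'⟩ = H²` and
`H·det(B,B',B'') > 0`, one has `det(B,B',B'') = H³` and
`B''' = Hκ₂'·B + 2Hκ₂·B'` with `κ₂ = −⟨B'',B''⟩/(2H³)`. -/
theorem stmt17
    (I : Set ℝ) (hIopen : IsOpen I) (hIconn : I.OrdConnected)
    (H : ℝ) (hH : H ≠ 0)
    (B : ℝ → Fin 3 → ℝ)
    (hBsm : ContDiffOn ℝ (⊤ : ℕ∞) B I)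
    (hBB : ∀ s ∈ I, ml (B s) (B s) = 0)
    (hB'B' : ∀ s ∈ I, ml (deriv B s) (deriv B s) = H ^ 2)
    (hdet : ∀ s ∈ I, 0 < H * det3 (B s) (deriv B s) (deriv (deriv B) s))
    (κ₂ : ℝ → ℝ)
    (hκdef : ∀ s, κ₂ s = -(ml (deriv (deriv B) s) (deriv (deriv B) s)) / (2 * H ^ 3)) :
    ∀ s ∈ I,
      det3 (B s) (deriv B s) (deriv (deriv B) s) = H ^ 3 ∧
      deriv (deriv (deriv B)) s
        = (H * deriv κ₂ s) • B s + (2 * H * κ₂ s) • deriv B s :=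
  stmt17_general I hIopen H hH B hBsm hBB hB'B' hdet κ₂ hκdef
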